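/- Let G be a 2-edge-connected graph with minimum degree 3 that is not 3-edge-connected, with a fixed chain decomposition. Then the two edges of every 2-edge-cut of G are contained in a common chain of the decomposition. -/
import Mathlib


open SimpleGraph

variable {V : Type*} [Fintype V] [DecidableEq V]

/-- `G` is `k`-edge-connected. -/
def EdgeConnGE (G : SimpleGraph V) (k : ℕ) : Prop :=
  2 ≤ Fintype.card V ∧ ∀ S : Finset (Sym2 V), S.card < k → (G.deleteEdges ↑S).Connected

/-- A DFS tree of `G`: a rooted spanning tree (given by a parent function) whose
tree edges are edges of `G` and such that every edge of `G` joins two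
ancestor-comparable vertices. -/
structure DFSTree (G : SimpleGraph V) where
  root : V
  parent : V → V
  parent_root : parent root = root
  parent_adj : ∀ v, v ≠ root → G.Adj v (parent v)
  reaches_root : ∀ v, ∃ n, parent^[n] v = root
  dfs_edge : ∀ u v, G.Adj u v → (∃ n, parent^[n] v = u) ∨ (∃ n, parent^[n] u = v)

/-- `a` is an ancestor of `b` in the DFS tree (possibly `a = b`). -/
def DFSTree.Anc {G : SimpleGraph V} (t : DFSTree G) (a b : V) : Prop :=
  ∃ n, t.parent^[n] b = a

/-- `e` is a tree edge of the DFS tree. -/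
def DFSTree.TreeEdge {G : SimpleGraph V} (t : DFSTree G) (e : Sym2 V) : Prop :=
  ∃ v, v ≠ t.root ∧ e = s(v, t.parent v)

/-- A 2-edge-cut: two distinct edges of `G` whose removal disconnects `G`. -/
def Is2EdgeCut (G : SimpleGraph V) (e₁ e₂ : Sym2 V) : Prop :=
  e₁ ∈ G.edgeSet ∧ e₂ ∈ G.edgeSet ∧ e₁ ≠ e₂ ∧ ¬ (G.deleteEdges {e₁, e₂}).Connected


/-- A chain decomposition of `G` with respect to the DFS tree `t`.

Vertices are processed in DFS order (recorded by the numbering `num`); when a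
vertex `v = src i` is processed, each back-edge `s(src i, low i)` starting at it
generates the chain `Cᵢ`, which consists of this back-edge together with the
tree path from `low i` upward until the first already visited vertex `tgt i`.
A vertex counts as visited (just before chain `i` is built) if its DFS number
is at most that of `src i`, or if it lies on an earlier chain `Cⱼ`, `j < i`
(i.e. it equals `src j` or lies on the tree path from `low j` up to `tgt j`). -/
structure ChainDecomp (G : SimpleGraph V) (t : DFSTree G) where
  /-- the DFS (discovery) numbering of the vertices -/
  num : V → ℕ
  num_inj : Function.Injective num
  num_parent : ∀ v, v ≠ t.root → num (t.parent v) < num v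
  /-- number of chains -/
  k : ℕ
  /-- `src i = s(Cᵢ)`, the source (upper endpoint of the back-edge) of chain `i` -/
  src : Fin k → V
  /-- `low i`, the lower endpoint of the back-edge of chain `i` -/
  low : Fin k → V
  /-- `tgt i = t(Cᵢ)`, the target of chain `i` -/
  tgt : Fin k → V
  back_adj : ∀ i, G.Adj (src i) (low i)
  back_anc : ∀ i, t.Anc (src i) (low i)
  back_nontree : ∀ i, ¬ t.TreeEdge s(src i, low i)
  /-- distinct chains come from distinct back-edges -/
  back_inj : ∀ i j, s(src i, low i) = s(src j, low j) → i = j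
  /-- every back-edge of `G` generates a chain -/
  back_surj : ∀ e ∈ G.edgeSet, ¬ t.TreeEdge e → ∃ i, e = s(src i, low i)
  /-- chains are generated in DFS order of their sources -/
  ordered : ∀ i j : Fin k, i ≤ j → num (src i) ≤ num (src j)
  /-- the target lies on the tree path from `low i` to the root -/
  tgt_anc : ∀ i, t.Anc (tgt i) (low i)
  /-- the target is visited when chain `i` is built -/
  tgt_visited : ∀ i : Fin k,
    num (tgt i) ≤ num (src i) ∨
    ∃ j : Fin k, j < i ∧
      (tgt i = src j ∨ (t.Anc (tgt j) (tgt i) ∧ t.Anc (tgt i) (low j)))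
  /-- the target is the *first* visited vertex on the way up: no vertex strictly
  between `low i` and `tgt i` is visited when chain `i` is built -/
  path_unvisited : ∀ i : Fin k, ∀ u : V,
    t.Anc (tgt i) u → t.Anc u (low i) → u ≠ tgt i →
    num (src i) < num u ∧
    ∀ j : Fin k, j < i →
      ¬ (u = src j ∨ (t.Anc (tgt j) u ∧ t.Anc u (low j)))

section Aux
set_option linter.unusedSectionVars false

namespace DFSTree
variable {G : SimpleGraph V} (t : DFSTree G)

lemma anc_refl' (a : V) : t.Anc a a := ⟨0, rfl⟩

lemma anc_trans' {a b c : V} (h1 : t.Anc a b) (h2 : t.Anc b c) : t.Anc a c := by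
  obtain ⟨m, hm⟩ := h1; obtain ⟨n, hn⟩ := h2
  exact ⟨m + n, by rw [Function.iterate_add_apply, hn, hm]⟩

lemma iterate_root' (n : ℕ) : t.parent^[n] t.root = t.root := by
  induction n with
  | zero => rfl
  | succ n ih => rw [Function.iterate_succ_apply, t.parent_root, ih]

lemma eq_root_of_periodic' {v : V} {n : ℕ} (hn : 0 < n) (h : t.parent^[n] v = v) :
    v = t.root := by
  obtain ⟨N, hN⟩ := t.reaches_root v
  have hper : ∀ q : ℕ, t.parent^[n * q] v = v := by
    intro q
    induction q with
    | zero => rfl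
    | succ q ih => rw [Nat.mul_succ, Function.iterate_add_apply, h, ih]
  have h1 : t.parent^[n * (N + 1)] v = v := hper _
  have hle : N ≤ n * (N + 1) := by nlinarith
  have h2 : n * (N + 1) = (n * (N + 1) - N) + N := by omega
  rw [h2, Function.iterate_add_apply, hN, iterate_root'] at h1
  exact h1.symm

lemma anc_antisymm' {a b : V} (h1 : t.Anc a b) (h2 : t.Anc b a) : a = b := by
  obtain ⟨m, hm⟩ := h1; obtain ⟨n, hn⟩ := h2
  rcases Nat.eq_zero_or_pos (m + n) with h | h
  · obtain ⟨rfl, rfl⟩ : m = 0 ∧ n = 0 := by omega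
    exact hm.symm
  · have hp : t.parent^[n + m] b = b := by rw [Function.iterate_add_apply, hm, hn]
    have hb := t.eq_root_of_periodic' (show 0 < n + m by omega) hp
    subst hb
    rw [iterate_root'] at hm; exact hm.symm

lemma anc_total' {a b c : V} (h1 : t.Anc a c) (h2 : t.Anc b c) :
    t.Anc a b ∨ t.Anc b a := by
  obtain ⟨m, hm⟩ := h1; obtain ⟨n, hn⟩ := h2
  rcases le_or_gt m n with h | h
  · right; exact ⟨n - m, by rw [← hm, ← Function.iterate_add_apply, Nat.sub_add_cancel h, hn]⟩
  · left; exact ⟨m - n, by rw [← hn, ← Function.iterate_add_apply, Nat.sub_add_cancel h.le, hm]⟩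

end DFSTree

namespace ChainDecomp
variable {G : SimpleGraph V} {t : DFSTree G} (cd : ChainDecomp G t)

lemma num_lt_of_iterate : ∀ n (a b : V), t.parent^[n] b = a → a ≠ b →
    cd.num a < cd.num b := by
  intro n
  induction n with
  | zero => intro a b h hne; exact absurd h.symm hne
  | succ n ih =>
    intro a b h hne
    by_cases hb : b = t.root
    · subst hb; rw [t.iterate_root'] at h; exact absurd h.symm hne
    · have h1 : cd.num (t.parent b) < cd.num b := cd.num_parent b hb
      rw [Function.iterate_succ_apply] at h
      by_cases ha : a = t.parent b
      · exact ha ▸ h1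
      · exact (ih a (t.parent b) h ha).trans h1

lemma num_lt_of_anc {a b : V} (h : t.Anc a b) (hne : a ≠ b) :
    cd.num a < cd.num b := by
  obtain ⟨n, hn⟩ := h; exact cd.num_lt_of_iterate n a b hn hne

lemma num_le_of_anc {a b : V} (h : t.Anc a b) : cd.num a ≤ cd.num b := by
  by_cases hne : a = b
  · exact hne ▸ le_rfl
  · exact (cd.num_lt_of_anc h hne).le

/-- Auxiliary step of the descent. -/
lemma claimE_aux (v : V) (n : ℕ)
    (ih : ∀ j : Fin cd.k, (j : ℕ) < n → t.Anc (cd.src j) v → cd.src j ≠ v →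
      t.Anc v (cd.low j) →
      ∃ i : Fin cd.k, v ≠ cd.tgt i ∧ t.Anc (cd.tgt i) v ∧ t.Anc v (cd.low i))
    (j : Fin cd.k) (hj : (j : ℕ) < n + 1)
    (hsnum : cd.num (cd.src j) < cd.num v) (hvt : t.Anc v (cd.tgt j)) :
    ∃ i : Fin cd.k, v ≠ cd.tgt i ∧ t.Anc (cd.tgt i) v ∧ t.Anc v (cd.low i) := by
  have hvnum : cd.num v ≤ cd.num (cd.tgt j) := cd.num_le_of_anc hvt
  rcases cd.tgt_visited j with hnum | ⟨j', hj', hcase⟩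
  · omega
  · have hjj' : (j' : ℕ) < (j : ℕ) := hj'
    have hord : cd.num (cd.src j') ≤ cd.num (cd.src j) := cd.ordered j' j hj'.le
    rcases hcase with heq | ⟨h1', h2'⟩
    · rw [heq] at hvnum; omega
    · have hlow' : t.Anc v (cd.low j') := t.anc_trans' hvt h2'
      rcases t.anc_total' (cd.back_anc j') hlow' with hs | hs
      · have hne : cd.src j' ≠ v := by
          intro he; rw [he] at hord; omega
        exact ih j' (by omega) hs hne hlow'
      · have := cd.num_le_of_anc hs; omega

/-- Descent: if some back-edge chain crosses strictly over `v`, then `v` lies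
strictly inside some chain's tree path. -/
lemma claimE (v : V) :
    ∀ n, ∀ j : Fin cd.k, (j : ℕ) < n → t.Anc (cd.src j) v → cd.src j ≠ v →
      t.Anc v (cd.low j) →
      ∃ i : Fin cd.k, v ≠ cd.tgt i ∧ t.Anc (cd.tgt i) v ∧ t.Anc v (cd.low i) := by
  intro n
  induction n with
  | zero => intro j hj; omega
  | succ n ih =>
    intro j hj hsrc hsrcne hlow
    have hsnum : cd.num (cd.src j) < cd.num v := cd.num_lt_of_anc hsrc hsrcne
    have hcmp := t.anc_total' (cd.tgt_anc j) hlow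
    by_cases hvt' : v = cd.tgt j
    · -- handled below via common part
      have hvt : t.Anc v (cd.tgt j) := hvt' ▸ t.anc_refl' v
      exact cd.claimE_aux v n ih j hj hsnum hvt
    · rcases hcmp with htv | hvt
      · exact ⟨j, fun h => hvt' h, htv, hlow⟩
      · exact cd.claimE_aux v n ih j hj hsnum hvt

end ChainDecomp
end Aux


section Aux2
set_option linter.unusedSectionVars false
variable {G : SimpleGraph V} {t : DFSTree G} (cd : ChainDecomp G t)

lemma exists_crossing_edge {G' : SimpleGraph V} {P : V → Prop} :
    ∀ {a b : V}, G'.Walk a b → P a → ¬ P b → ∃ x y, G'.Adj x y ∧ P x ∧ ¬ P y := by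
  intro a b w
  induction w with
  | nil => intro h1 h2; exact absurd h1 h2
  | @cons u c b h w ih =>
    intro h1 h2
    by_cases hc : P c
    · exact ih hc h2
    · exact ⟨u, c, h, h1, hc⟩

lemma ChainDecomp.cover (h2 : EdgeConnGE G 2) (v : V) (hv : v ≠ t.root) :
    ∃ i : Fin cd.k, v ≠ cd.tgt i ∧ t.Anc (cd.tgt i) v ∧ t.Anc v (cd.low i) := by
  have hconn : (G.deleteEdges ↑({s(v, t.parent v)} : Finset (Sym2 V))).Connected :=
    h2.2 _ (by simp)
  obtain ⟨w⟩ := hconn.preconnected v (t.parent v)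
  have hPnb : ¬ t.Anc v (t.parent v) := by
    rintro ⟨n, hn⟩
    exact hv (t.eq_root_of_periodic' (n := n + 1) (by omega)
      (by rwa [Function.iterate_succ_apply]))
  obtain ⟨x, y, hxy, hPx, hPy⟩ := exists_crossing_edge w (t.anc_refl' v) hPnb
  rw [SimpleGraph.deleteEdges_adj] at hxy
  obtain ⟨hadj, hne_edge⟩ := hxy
  simp only [Finset.coe_singleton, Set.mem_singleton_iff] at hne_edge
  have hyx : t.Anc y x := by
    rcases t.dfs_edge x y hadj with h | h
    · exact absurd (t.anc_trans' hPx h) hPy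
    · exact h
  have hyv : t.Anc y v := by
    rcases t.anc_total' hyx hPx with h | h
    · exact h
    · exact absurd h hPy
  have hyne : y ≠ v := fun h => hPy (h ▸ t.anc_refl' v)
  have hxyne : x ≠ y := hadj.ne
  have hnt : ¬ t.TreeEdge s(x, y) := by
    rintro ⟨u, hu, he⟩
    rcases Sym2.eq_iff.1 he with ⟨rfl, hy⟩ | ⟨hx, rfl⟩
    · -- x = u, y = parent x
      obtain ⟨m, hm⟩ := hPx
      rcases Nat.eq_zero_or_pos m with hm0 | hm0
      · subst hm0
        exact hne_edge (by rw [← hm, hy]; rfl)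
      · apply hPy
        refine ⟨m - 1, ?_⟩
        rw [hy]
        have hmm : m = (m - 1) + 1 := by omega
        rw [hmm, Function.iterate_succ_apply] at hm
        exact hm
    · -- x = parent y
      have hxy2 : t.Anc x y := ⟨1, hx.symm⟩
      exact hxyne (t.anc_antisymm' hxy2 hyx)
  obtain ⟨i, hi⟩ := cd.back_surj s(x, y) (G.mem_edgeSet.mpr hadj) hnt
  rcases Sym2.eq_iff.1 hi with ⟨hx, hy⟩ | ⟨hx, hy⟩
  · -- x = src i, y = low i : impossible since then Anc x y
    have hxy2 : t.Anc x y := by rw [hx, hy]; exact cd.back_anc i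
    exact absurd (t.anc_antisymm' hxy2 hyx) hxyne
  · -- x = low i, y = src i
    exact cd.claimE v cd.k i i.isLt (hy ▸ hyv) (hy ▸ hyne) (hx ▸ hPx)

lemma walk_up (H : SimpleGraph V) (z : V) (K : ℕ)
    (hadj : ∀ c < K, H.Adj (t.parent^[c] z) (t.parent^[c + 1] z)) :
    H.Reachable z (t.parent^[K] z) := by
  induction K with
  | zero => exact SimpleGraph.Reachable.refl z
  | succ K ihK =>
    exact (ihK (fun c hc => hadj c (by omega))).trans (hadj K (by omega)).reachable

end Aux2


/-- The edges of chain `i`: its back-edge together with the tree edges on the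
tree path from `low i` up to `tgt i`. -/
def ChainDecomp.chainEdges {G : SimpleGraph V} {t : DFSTree G}
    (cd : ChainDecomp G t) (i : Fin cd.k) : Set (Sym2 V) :=
  {s(cd.src i, cd.low i)} ∪
  {e | ∃ u : V, u ≠ cd.tgt i ∧ t.Anc (cd.tgt i) u ∧ t.Anc u (cd.low i) ∧
    e = s(u, t.parent u)}

/-- Vertex `v` s-belongs to chain `i`: either `v` is the root and `i` is the
first chain, or the tree edge from `v` to its parent lies on chain `i`. -/
def ChainDecomp.SBelongs {G : SimpleGraph V} {t : DFSTree G}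
    (cd : ChainDecomp G t) (v : V) (i : Fin cd.k) : Prop :=
  (v = t.root ∧ (i : ℕ) = 0) ∨
  (v ≠ t.root ∧ s(v, t.parent v) ∈ cd.chainEdges i)

/-- In a 2-edge-connected graph of minimum degree 3 that is not
3-edge-connected, the two edges of every 2-edge-cut are contained in a common
chain of the chain decomposition. -/
theorem stmt_19 (G : SimpleGraph V) (t : DFSTree G) (cd : ChainDecomp G t)
    (h2 : EdgeConnGE G 2) (hnot3 : ¬ EdgeConnGE G 3)
    (hmin : ∀ v : V, 3 ≤ {w : V | G.Adj v w}.ncard)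
    (e₁ e₂ : Sym2 V) (hcut : Is2EdgeCut G e₁ e₂) :
    ∃ i : Fin cd.k, e₁ ∈ cd.chainEdges i ∧ e₂ ∈ cd.chainEdges i := by
  by_contra hgoal
  push_neg at hgoal
  set H := G.deleteEdges {e₁, e₂} with hH
  apply hcut.2.2.2
  have key : ∀ n, ∀ v : V, cd.num v < n → H.Reachable t.root v := by
    intro n
    induction n with
    | zero => intro v hvn; omega
    | succ n ih =>
      intro v hvn
      by_cases hv : v = t.root
      · exact hv ▸ SimpleGraph.Reachable.refl _
      obtain ⟨i, hvt, hti, hvl⟩ := cd.cover h2 v hv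
      have hsrc_lt : cd.num (cd.src i) < cd.num v := (cd.path_unvisited i v hti hvl hvt).1
      have htgt_lt : cd.num (cd.tgt i) < cd.num v := cd.num_lt_of_anc hti (Ne.symm hvt)
      have hex : ∃ m, t.parent^[m] v = cd.tgt i := hti
      set K : ℕ := Nat.find hex with hKeq
      have hKdef : t.parent^[K] v = cd.tgt i := Nat.find_spec hex
      have hKmin : ∀ c < K, t.parent^[c] v ≠ cd.tgt i := fun c hc => Nat.find_min hex hc
      have hroot_ne : ∀ c < K, t.parent^[c] v ≠ t.root := by
        intro c hc heq
        have hK2 : t.parent^[K] v = t.root := by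
          have hKc : K = (K - c) + c := by omega
          rw [hKc, Function.iterate_add_apply, heq, t.iterate_root']
        exact hKmin c hc (by rw [heq, ← hK2, hKdef])
      obtain ⟨a, ha⟩ := hvl
      have hupC : ∀ c < K,
          s(t.parent^[c] v, t.parent (t.parent^[c] v)) ∈ cd.chainEdges i := by
        intro c hc
        refine Set.mem_union_right _ ⟨t.parent^[c] v, hKmin c hc, ⟨K - c, ?_⟩, ⟨c + a, ?_⟩, rfl⟩
        · rw [← Function.iterate_add_apply, show K - c + c = K by omega, hKdef]
        · rw [Function.iterate_add_apply, ha]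
      by_cases hup : ∀ c < K, s(t.parent^[c] v, t.parent^[c + 1] v) ∉ ({e₁, e₂} : Set (Sym2 V))
      · have hreach : H.Reachable v (cd.tgt i) := by
          rw [← hKdef]
          apply walk_up (t := t) H v K
          intro c hc
          rw [Function.iterate_succ_apply', hH, SimpleGraph.deleteEdges_adj]
          refine ⟨t.parent_adj _ (hroot_ne c hc), ?_⟩
          have h := hup c hc
          rwa [Function.iterate_succ_apply'] at h
        exact (ih (cd.tgt i) (by omega)).trans hreach.symm
      · push_neg at hup
        obtain ⟨c, hcK, hdel⟩ := hup
        rw [Function.iterate_succ_apply'] at hdel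
        set u := t.parent^[c] v with hu
        have heupC : s(u, t.parent u) ∈ cd.chainEdges i := hupC c hcK
        have honly : ∀ f ∈ cd.chainEdges i, f ≠ s(u, t.parent u) →
            f ∉ ({e₁, e₂} : Set (Sym2 V)) := by
          intro f hfC hfne hfmem
          simp only [Set.mem_insert_iff, Set.mem_singleton_iff] at hfmem hdel
          rcases hdel with h1 | h1 <;> rcases hfmem with hf1 | hf1
          · exact hfne (hf1.trans h1.symm)
          · exact hgoal i (by rw [← h1]; exact heupC) (by rw [← hf1]; exact hfC)
          · exact hgoal i (by rw [← hf1]; exact hfC) (by rw [← h1]; exact heupC)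
          · exact hfne (hf1.trans h1.symm)
        have huanc : t.Anc u v := ⟨c, rfl⟩
        have hu_ne_root : u ≠ t.root := hroot_ne c hcK
        have hdown_ne_root : ∀ d < a, t.parent^[d] (cd.low i) ≠ t.root := by
          intro d hd heq
          apply hv
          have hvv : v = t.parent^[a - d] (t.parent^[d] (cd.low i)) := by
            rw [← Function.iterate_add_apply, show a - d + d = a by omega, ha]
          rw [hvv, heq, t.iterate_root']
        have hdown_anc : ∀ d < a, t.Anc v (t.parent^[d] (cd.low i)) ∧
            v ≠ t.parent^[d] (cd.low i) := by
          intro d hd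
          have h1 : t.parent^[a - d] (t.parent^[d] (cd.low i)) = v := by
            rw [← Function.iterate_add_apply, show a - d + d = a by omega, ha]
          refine ⟨⟨a - d, h1⟩, fun heq => ?_⟩
          apply hv
          refine t.eq_root_of_periodic' (n := a - d) (by omega) ?_
          rw [← heq] at h1
          exact h1
        have hdownC : ∀ d < a,
            s(t.parent^[d] (cd.low i), t.parent (t.parent^[d] (cd.low i))) ∈ cd.chainEdges i := by
          intro d hd
          obtain ⟨hanc, hne⟩ := hdown_anc d hd
          refine Set.mem_union_right _ ⟨t.parent^[d] (cd.low i), ?_, t.anc_trans' hti hanc, ⟨d, rfl⟩, rfl⟩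
          intro heq
          have h2 : t.Anc v (cd.tgt i) := by rw [← heq]; exact hanc
          exact hvt (t.anc_antisymm' hti h2).symm
        have hdown_ne_up : ∀ d < a,
            s(t.parent^[d] (cd.low i), t.parent (t.parent^[d] (cd.low i))) ≠ s(u, t.parent u) := by
          intro d hd heq
          obtain ⟨hanc, hne⟩ := hdown_anc d hd
          rcases Sym2.eq_iff.1 heq with ⟨h1, h2⟩ | ⟨h1, h2⟩
          · apply hne
            have h3 : t.Anc (t.parent^[d] (cd.low i)) v := by rw [h1]; exact huanc
            exact t.anc_antisymm' hanc h3
          · have hper : t.parent (t.parent u) = u := by rw [← h1, h2]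
            have hper2 : t.parent^[2] u = u := by
              rw [show (2 : ℕ) = 0 + 1 + 1 by rfl, Function.iterate_succ_apply',
                Function.iterate_succ_apply', Function.iterate_zero_apply]
              exact hper
            exact hu_ne_root (t.eq_root_of_periodic' (by omega) hper2)
        have hback_ne_up : s(cd.src i, cd.low i) ≠ s(u, t.parent u) := by
          intro heq
          exact cd.back_nontree i ⟨u, hu_ne_root, heq⟩
        have hreach_low : H.Reachable (cd.low i) v := by
          rw [← ha]
          apply walk_up (t := t) H (cd.low i) a
          intro d hd
          rw [Function.iterate_succ_apply', hH, SimpleGraph.deleteEdges_adj]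
          exact ⟨t.parent_adj _ (hdown_ne_root d hd),
            honly _ (hdownC d hd) (hdown_ne_up d hd)⟩
        have hback : H.Adj (cd.src i) (cd.low i) := by
          rw [hH, SimpleGraph.deleteEdges_adj]
          exact ⟨cd.back_adj i, honly _ (Set.mem_union_left _ rfl) hback_ne_up⟩
        exact ((ih (cd.src i) (by omega)).trans hback.reachable).trans hreach_low
  have hreach : ∀ v, H.Reachable t.root v := fun v => key (cd.num v + 1) v (by omega)
  rw [SimpleGraph.connected_iff]
  exact ⟨fun a b => (hreach a).symm.trans (hreach b), ⟨t.root⟩⟩
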